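/- Transparency of generalized ties: for every n ≥ 2, all indices 1 ≤ i < j ≤ n and every 1 ≤ k ≤ n−1 with k ∉ {i−1, i, j−1, j}, the equalities σ_k η_{i,j} = η_{i,j} σ_k and σ_k⁻¹ η_{i,j} = η_{i,j} σ_k⁻¹ hold in the tied braid monoid TM_n. -/

import Mathlib

/-!
The tied braid monoid `TM n` (n ≥ 2), presented by generators
σ_1,…,σ_{n−1}, σ_1⁻¹,…,σ_{n−1}⁻¹, η_1,…,η_{n−1} subject to the relations:
σ_i σ_i⁻¹ = σ_i⁻¹ σ_i = 1; σ_i σ_{i+1} σ_i = σ_{i+1} σ_i σ_{i+1};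
σ_i σ_j = σ_j σ_i for |i−j| ≥ 2; η_i η_j = η_j η_i for all i, j;
η_i σ_i = σ_i η_i; η_i σ_j = σ_j η_i for |i−j| ≥ 2;
η_i σ_j σ_i^ε = σ_j σ_i^ε η_j for |i−j| = 1, ε = ±1;
η_i η_j σ_i = η_j σ_i η_j = σ_i η_i η_j for |i−j| = 1; η_i² = η_i.
-/

/-- Generators of the tied braid monoid: σ_i, σ_i⁻¹ and η_i for 1 ≤ i ≤ n−1. -/
inductive TMGen (n : ℕ) : Type
  | sig (i : ℕ) (h : 1 ≤ i ∧ i ≤ n - 1) : TMGen n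
  | sigInv (i : ℕ) (h : 1 ≤ i ∧ i ≤ n - 1) : TMGen n
  | eta (i : ℕ) (h : 1 ≤ i ∧ i ≤ n - 1) : TMGen n

/-- The word σ_i in the free monoid on the generators. -/
def wS (n i : ℕ) : FreeMonoid (TMGen n) :=
  if h : 1 ≤ i ∧ i ≤ n - 1 then FreeMonoid.of (TMGen.sig i h) else 1

/-- The word σ_i⁻¹ in the free monoid on the generators. -/
def wSI (n i : ℕ) : FreeMonoid (TMGen n) :=
  if h : 1 ≤ i ∧ i ≤ n - 1 then FreeMonoid.of (TMGen.sigInv i h) else 1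

/-- The word η_i in the free monoid on the generators. -/
def wE (n i : ℕ) : FreeMonoid (TMGen n) :=
  if h : 1 ≤ i ∧ i ≤ n - 1 then FreeMonoid.of (TMGen.eta i h) else 1

/-- The defining relations of the tied braid monoid `TM n`. -/
inductive TMRel (n : ℕ) : FreeMonoid (TMGen n) → FreeMonoid (TMGen n) → Prop
  | inv_right (i : ℕ) (h : 1 ≤ i ∧ i ≤ n - 1) :
      TMRel n (wS n i * wSI n i) 1
  | inv_left (i : ℕ) (h : 1 ≤ i ∧ i ≤ n - 1) :
      TMRel n (wSI n i * wS n i) 1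
  | braid (i : ℕ) (h : 1 ≤ i ∧ i + 1 ≤ n - 1) :
      TMRel n (wS n i * wS n (i+1) * wS n i) (wS n (i+1) * wS n i * wS n (i+1))
  | sig_comm (i j : ℕ) (hi : 1 ≤ i ∧ i ≤ n - 1) (hj : 1 ≤ j ∧ j ≤ n - 1)
      (hij : i + 2 ≤ j ∨ j + 2 ≤ i) :
      TMRel n (wS n i * wS n j) (wS n j * wS n i)
  | eta_comm (i j : ℕ) (hi : 1 ≤ i ∧ i ≤ n - 1) (hj : 1 ≤ j ∧ j ≤ n - 1) :
      TMRel n (wE n i * wE n j) (wE n j * wE n i)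
  | eta_sig (i : ℕ) (h : 1 ≤ i ∧ i ≤ n - 1) :
      TMRel n (wE n i * wS n i) (wS n i * wE n i)
  | eta_sig_far (i j : ℕ) (hi : 1 ≤ i ∧ i ≤ n - 1) (hj : 1 ≤ j ∧ j ≤ n - 1)
      (hij : i + 2 ≤ j ∨ j + 2 ≤ i) :
      TMRel n (wE n i * wS n j) (wS n j * wE n i)
  | eta_slide_pos (i j : ℕ) (hi : 1 ≤ i ∧ i ≤ n - 1) (hj : 1 ≤ j ∧ j ≤ n - 1)
      (hij : j = i + 1 ∨ i = j + 1) :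
      TMRel n (wE n i * wS n j * wS n i) (wS n j * wS n i * wE n j)
  | eta_slide_neg (i j : ℕ) (hi : 1 ≤ i ∧ i ≤ n - 1) (hj : 1 ≤ j ∧ j ≤ n - 1)
      (hij : j = i + 1 ∨ i = j + 1) :
      TMRel n (wE n i * wS n j * wSI n i) (wS n j * wSI n i * wE n j)
  | eta_eta_sig₁ (i j : ℕ) (hi : 1 ≤ i ∧ i ≤ n - 1) (hj : 1 ≤ j ∧ j ≤ n - 1)
      (hij : j = i + 1 ∨ i = j + 1) :
      TMRel n (wE n i * wE n j * wS n i) (wE n j * wS n i * wE n j)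
  | eta_eta_sig₂ (i j : ℕ) (hi : 1 ≤ i ∧ i ≤ n - 1) (hj : 1 ≤ j ∧ j ≤ n - 1)
      (hij : j = i + 1 ∨ i = j + 1) :
      TMRel n (wE n j * wS n i * wE n j) (wS n i * wE n i * wE n j)
  | eta_idem (i : ℕ) (h : 1 ≤ i ∧ i ≤ n - 1) :
      TMRel n (wE n i * wE n i) (wE n i)

/-- The tied braid monoid `TM n`: the quotient of the free monoid on the
generators by the congruence generated by the defining relations. -/
def TM (n : ℕ) := (conGen (TMRel n)).Quotient

instance (n : ℕ) : Monoid (TM n) :=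
  inferInstanceAs (Monoid ((conGen (TMRel n)).Quotient))

/-- The generator σ_i of `TM n` (defined for 1 ≤ i ≤ n−1; junk value 1 otherwise). -/
def TM.s (n i : ℕ) : TM n := (conGen (TMRel n)).mk' (wS n i)

/-- The generator σ_i⁻¹ of `TM n` (defined for 1 ≤ i ≤ n−1; junk value 1 otherwise). -/
def TM.sInv (n i : ℕ) : TM n := (conGen (TMRel n)).mk' (wSI n i)

/-- The generator η_i of `TM n` (defined for 1 ≤ i ≤ n−1; junk value 1 otherwise). -/
def TM.e (n i : ℕ) : TM n := (conGen (TMRel n)).mk' (wE n i)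

/-- The generalized tie η_{i,j} = σ_i σ_{i+1} ⋯ σ_{j−2} η_{j−1} σ_{j−2}⁻¹ ⋯ σ_{i+1}⁻¹ σ_i⁻¹,
for 1 ≤ i < j ≤ n (in particular η_{i,i+1} = η_i). -/
def TM.genTie (n i j : ℕ) : TM n :=
  (((List.range' i (j - 1 - i)).map (TM.s n)).prod) * TM.e n (j - 1) *
    (((List.range' i (j - 1 - i)).reverse.map (TM.sInv n)).prod)

/-!
The generalized tie η_{i,j} is the conjugate u η_{j-1} u⁻¹ of η_{j-1} by the unit
u = σ_i ⋯ σ_{j-2}. If k lies outside [i-1, j], then σ_k commutes with u and with η_{j-1}.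
If i < k < j-1, the braid relations give σ_k u = u σ_{k-1}, and σ_{k-1} commutes with η_{j-1}
since k-1 ≤ j-3. In both cases σ_k commutes with the conjugate, hence so does σ_k⁻¹.
-/

theorem SemiconjBy.commute_units_conj {M : Type*} [Monoid M] {u : Mˣ} {s t e : M}
    (hs : SemiconjBy (↑u) t s) (ht : Commute t e) : Commute s (↑u * e * ↑u⁻¹) := by
  calc s * (↑u * e * ↑u⁻¹) = ↑u * t * e * ↑u⁻¹ := by simp only [← mul_assoc, ← hs.eq]
    _ = ↑u * e * (t * ↑u⁻¹) := by rw [mul_assoc (↑u) t, ht.eq]; simp only [mul_assoc]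
    _ = ↑u * e * ↑u⁻¹ * s := by rw [← hs.units_inv_symm_left.eq]; simp only [mul_assoc]

namespace TM

variable {n : ℕ}

theorem mk_eq_of_rel {a b : FreeMonoid (TMGen n)} (h : TMRel n a b) :
    ((conGen (TMRel n)).mk' a : TM n) = (conGen (TMRel n)).mk' b :=
  (Con.eq _).mpr (ConGen.Rel.of _ _ h)

theorem s_eq_one {i : ℕ} (h : ¬(1 ≤ i ∧ i ≤ n - 1)) : s n i = 1 := by
  rw [s, wS, dif_neg h, map_one]
  rfl

theorem sInv_eq_one {i : ℕ} (h : ¬(1 ≤ i ∧ i ≤ n - 1)) : sInv n i = 1 := by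
  rw [sInv, wSI, dif_neg h, map_one]
  rfl

theorem e_eq_one {i : ℕ} (h : ¬(1 ≤ i ∧ i ≤ n - 1)) : e n i = 1 := by
  rw [e, wE, dif_neg h, map_one]
  rfl

theorem s_mul_sInv (i : ℕ) : s n i * sInv n i = 1 := by
  by_cases h : 1 ≤ i ∧ i ≤ n - 1
  · exact mk_eq_of_rel (TMRel.inv_right i h)
  · rw [s_eq_one h, sInv_eq_one h, one_mul]

theorem sInv_mul_s (i : ℕ) : sInv n i * s n i = 1 := by
  by_cases h : 1 ≤ i ∧ i ≤ n - 1
  · exact mk_eq_of_rel (TMRel.inv_left i h)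
  · rw [s_eq_one h, sInv_eq_one h, one_mul]

theorem commute_s_s {i j : ℕ} (hij : i + 2 ≤ j ∨ j + 2 ≤ i) : Commute (s n i) (s n j) := by
  by_cases hi : 1 ≤ i ∧ i ≤ n - 1
  · by_cases hj : 1 ≤ j ∧ j ≤ n - 1
    · exact mk_eq_of_rel (TMRel.sig_comm i j hi hj hij)
    · rw [s_eq_one hj]; exact Commute.one_right _
  · rw [s_eq_one hi]; exact Commute.one_left _

theorem commute_s_e {i j : ℕ} (hij : j + 2 ≤ i ∨ i + 2 ≤ j) : Commute (s n i) (e n j) := by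
  by_cases hj : 1 ≤ j ∧ j ≤ n - 1
  · by_cases hi : 1 ≤ i ∧ i ≤ n - 1
    · exact (mk_eq_of_rel (TMRel.eta_sig_far j i hj hi hij)).symm
    · rw [s_eq_one hi]; exact Commute.one_left _
  · rw [e_eq_one hj]; exact Commute.one_right _

theorem s_braid {i : ℕ} (hi : 1 ≤ i) (hn : i + 2 ≤ n) :
    s n i * s n (i + 1) * s n i = s n (i + 1) * s n i * s n (i + 1) :=
  mk_eq_of_rel (TMRel.braid i ⟨hi, by omega⟩)

def sUnit (n i : ℕ) : (TM n)ˣ := ⟨s n i, sInv n i, s_mul_sInv i, sInv_mul_s i⟩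

/-- The unit σ_i σ_{i+1} ⋯ σ_{i+m-1}. -/
def sigmaProd (n i m : ℕ) : (TM n)ˣ := ((List.range' i m).map (sUnit n)).prod

theorem coe_sigmaProd (i m : ℕ) :
    (sigmaProd n i m : TM n) = ((List.range' i m).map (s n)).prod := by
  rw [sigmaProd, ← Units.coeHom_apply, map_list_prod, List.map_map]
  rfl

theorem coe_sigmaProd_inv (i m : ℕ) :
    (↑(sigmaProd n i m)⁻¹ : TM n) = ((List.range' i m).reverse.map (sInv n)).prod := by
  rw [sigmaProd, List.prod_inv_reverse, ← Units.coeHom_apply, map_list_prod, List.map_reverse,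
    List.map_map, List.map_map, ← List.map_reverse]
  rfl

theorem sigmaProd_add (i a b : ℕ) :
    sigmaProd n i (a + b) = sigmaProd n i a * sigmaProd n (i + a) b := by
  rw [sigmaProd, sigmaProd, sigmaProd, ← List.prod_append, ← List.map_append,
    List.range'_append_1]

theorem sigmaProd_one (i : ℕ) : sigmaProd n i 1 = sUnit n i := by
  simp [sigmaProd]

theorem genTie_eq_conj (i j : ℕ) :
    genTie n i j =
      ↑(sigmaProd n i (j - 1 - i)) * e n (j - 1) * ↑(sigmaProd n i (j - 1 - i))⁻¹ := by
  rw [genTie, coe_sigmaProd, coe_sigmaProd_inv]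

theorem commute_s_sigmaProd {k i m : ℕ}
    (h : ∀ x, i ≤ x → x < i + m → x + 2 ≤ k ∨ k + 2 ≤ x) :
    Commute (s n k) (sigmaProd n i m) := by
  rw [coe_sigmaProd]
  refine Commute.list_prod_right _ _ fun x hx => ?_
  obtain ⟨y, hy, rfl⟩ := List.mem_map.mp hx
  rw [List.mem_range'_1] at hy
  exact commute_s_s (h y hy.1 hy.2).symm

/-- σ_{i+a} commutes with the factors of σ_i ⋯ σ_{i+a+b+1} other than σ_{i+a} σ_{i+a+1}, and the
braid relation turns it into σ_{i+a+1} across those two. -/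
theorem semiconjBy_sigmaProd {i a b : ℕ} (hi : 1 ≤ i) (hn : i + a + 2 ≤ n) :
    SemiconjBy (↑(sigmaProd n i (a + b + 2))) (s n (i + a)) (s n (i + a + 1)) := by
  have hsplit : sigmaProd n i (a + b + 2) =
      sigmaProd n i a * (sUnit n (i + a) * sUnit n (i + a + 1)) * sigmaProd n (i + a + 2) b := by
    rw [show a + b + 2 = a + (1 + 1) + b by omega, sigmaProd_add, sigmaProd_add, sigmaProd_add,
      sigmaProd_one, sigmaProd_one]
    simp only [add_assoc]
  have hleft : Commute (sigmaProd n i a : TM n) (s n (i + a + 1)) :=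
    (commute_s_sigmaProd fun x _ hx => Or.inl (by omega)).symm
  have hbraid : SemiconjBy (s n (i + a) * s n (i + a + 1)) (s n (i + a)) (s n (i + a + 1)) := by
    simp only [SemiconjBy, ← mul_assoc, s_braid (n := n) (by omega : 1 ≤ i + a) hn]
  have hright : Commute (sigmaProd n (i + a + 2) b : TM n) (s n (i + a)) :=
    (commute_s_sigmaProd fun x hx _ => Or.inr (by omega)).symm
  rw [hsplit, Units.val_mul, Units.val_mul, Units.val_mul]
  exact SemiconjBy.mul_left (SemiconjBy.mul_left hleft hbraid) hright

theorem commute_s_genTie {i j k : ℕ} (hi : 1 ≤ i) (hij : i < j) (hj : j ≤ n)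
    (hki1 : k ≠ i - 1) (hki : k ≠ i) (hkj1 : k ≠ j - 1) (hkj : k ≠ j) :
    Commute (s n k) (genTie n i j) := by
  rw [genTie_eq_conj]
  by_cases hfar : k + 2 ≤ i ∨ j + 1 ≤ k
  · have hsigma : Commute (s n k) (sigmaProd n i (j - 1 - i)) :=
      commute_s_sigmaProd fun x _ _ => by omega
    exact hsigma.symm.commute_units_conj (commute_s_e (by omega))
  · obtain ⟨a, b, rfl, rfl⟩ : ∃ a b, k = i + a + 1 ∧ j = i + a + b + 3 :=
      ⟨k - i - 1, j - k - 2, by omega, by omega⟩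
    rw [show i + a + b + 3 - 1 - i = a + b + 2 by omega]
    exact (semiconjBy_sigmaProd hi (by omega)).commute_units_conj (commute_s_e (by omega))

end TM

theorem tm_genTie_transparent_general (n : ℕ) (i j k : ℕ)
    (hi : 1 ≤ i) (hij : i < j) (hj : j ≤ n)
    (hki1 : k ≠ i - 1) (hki : k ≠ i) (hkj1 : k ≠ j - 1) (hkj : k ≠ j) :
    TM.s n k * TM.genTie n i j = TM.genTie n i j * TM.s n k ∧
    TM.sInv n k * TM.genTie n i j = TM.genTie n i j * TM.sInv n k := by
  have h := TM.commute_s_genTie hi hij hj hki1 hki hkj1 hkj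
  exact ⟨h.eq, (h.units_inv_left (u := TM.sUnit n k)).eq⟩

/-- **Transparency of generalized ties**: for every n ≥ 2, all indices 1 ≤ i < j ≤ n
and every 1 ≤ k ≤ n−1 with k ∉ {i−1, i, j−1, j}, both σ_k and σ_k⁻¹ commute with
η_{i,j} in the tied braid monoid `TM n`. -/
theorem tm_genTie_transparent (n : ℕ) (hn : 2 ≤ n) (i j k : ℕ)
    (hi : 1 ≤ i) (hij : i < j) (hj : j ≤ n)
    (hk1 : 1 ≤ k) (hk2 : k ≤ n - 1)
    (hki1 : k ≠ i - 1) (hki : k ≠ i) (hkj1 : k ≠ j - 1) (hkj : k ≠ j) :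
    TM.s n k * TM.genTie n i j = TM.genTie n i j * TM.s n k ∧
    TM.sInv n k * TM.genTie n i j = TM.genTie n i j * TM.sInv n k :=
  tm_genTie_transparent_general n i j k hi hij hj hki1 hki hkj1 hkj
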